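/- With the setting of the previous statement, the map W ↦ tr(C_post(W)) is monotone decreasing in the weights: if 0 ≤ w_i ≤ w̃_i for all i, then tr(C_post(W̃)) ≤ tr(C_post(W)). -/
import Mathlib


open scoped RealInnerProductSpace

lemma inv_form_mono {H : Type*} [NormedAddCommGroup H] [InnerProductSpace ℝ H]
    (A B R Rt : H →L[ℝ] H)
    (hAsym : ∀ x y : H, ⟪A x, y⟫ = ⟪x, A y⟫)
    (hApos : ∀ x : H, 0 ≤ ⟪A x, x⟫)
    (hAB : ∀ x : H, ⟪A x, x⟫ ≤ ⟪B x, x⟫)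
    (hR : ∀ x, A (R x) = x) (hRt : ∀ x, B (Rt x) = x) (x : H) :
    ⟪Rt x, x⟫ ≤ ⟪R x, x⟫ := by
  set u := Rt x with hu
  set v := R x with hv
  have hx1 : B u = x := hRt x
  have hx2 : A v = x := hR x
  have cs : ⟪A u, v⟫ ^ 2 ≤ ⟪A u, u⟫ * ⟪A v, v⟫ := by
    have hq : ∀ t : ℝ, 0 ≤ ⟪A v, v⟫ * (t * t) + (2 * ⟪A u, v⟫) * t + ⟪A u, u⟫ := by
      intro t
      have h0 := hApos (u + t • v)
      have h1 : ⟪A v, u⟫ = ⟪A u, v⟫ := by rw [hAsym v u, real_inner_comm]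
      have expand : ⟪A (u + t • v), u + t • v⟫
          = ⟪A v, v⟫ * (t * t) + (2 * ⟪A u, v⟫) * t + ⟪A u, u⟫ := by
        simp only [map_add, map_smul, inner_add_left, inner_add_right,
          real_inner_smul_left, real_inner_smul_right, h1]
        ring
      linarith [expand ▸ h0]
    have hd := discrim_le_zero hq
    unfold discrim at hd
    nlinarith [hd]
  have ha : ⟪u, x⟫ = ⟪A u, v⟫ := by rw [← hx2, hAsym]
  have haB : ⟪u, x⟫ = ⟪B u, u⟫ := by rw [← hx1, real_inner_comm]
  have hbA : ⟪v, x⟫ = ⟪A v, v⟫ := by rw [← hx2, real_inner_comm]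
  have h0u : 0 ≤ ⟪u, x⟫ := by rw [haB]; exact le_trans (hApos u) (hAB u)
  have h0v : 0 ≤ ⟪v, x⟫ := by rw [hbA]; exact hApos v
  have key : ⟪u, x⟫ ^ 2 ≤ ⟪u, x⟫ * ⟪v, x⟫ := by
    calc ⟪u, x⟫ ^ 2 = ⟪A u, v⟫ ^ 2 := by rw [ha]
    _ ≤ ⟪A u, u⟫ * ⟪A v, v⟫ := cs
    _ ≤ ⟪B u, u⟫ * ⟪A v, v⟫ := by
        have := hAB u
        nlinarith [hApos v]
    _ = ⟪u, x⟫ * ⟪v, x⟫ := by rw [haB, hbA]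
  have : ⟪u, x⟫ ≤ ⟪v, x⟫ := by
    rcases eq_or_lt_of_le h0u with h | h
    · linarith
    · nlinarith
  exact this


/-- With the setting of Statement 6 (Γ = diag(σ²) diagonal), the map
W ↦ tr(C_post(W)) is monotone decreasing in the weights: if 0 ≤ w_i ≤ w̃_i for all i,
then tr(C_post(W̃)) ≤ tr(C_post(W)).  Here C_post(W) is realized as
C_pr^{1/2}(I + C_pr^{1/2} F* W_σ F C_pr^{1/2})^{−1} C_pr^{1/2} with
W_σ = diag(w_i/σ_i²). -/
theorem posterior_trace_monotone_in_weights
    {H : Type*} [NormedAddCommGroup H] [InnerProductSpace ℝ H] [CompleteSpace H]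
    (b : HilbertBasis ℕ ℝ H)
    {q : ℕ} (F : H →L[ℝ] EuclideanSpace ℝ (Fin q))
    (σ : Fin q → ℝ) (hσ : ∀ i, 0 < σ i)
    (Cpr sqrtCpr : H →L[ℝ] H)
    (hCpr_sa : IsSelfAdjoint Cpr)
    (hCpr_pos : ∀ x : H, x ≠ 0 → 0 < ⟪Cpr x, x⟫)
    (hCpr_tc : Summable (fun k => ⟪Cpr (b k), b k⟫))
    (hsqrt_sa : IsSelfAdjoint sqrtCpr)
    (hsqrt : sqrtCpr ∘L sqrtCpr = Cpr)
    (w wt : Fin q → ℝ) (hw : ∀ i, 0 ≤ w i) (hle : ∀ i, w i ≤ wt i)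
    (Wσ Wσt : EuclideanSpace ℝ (Fin q) →L[ℝ] EuclideanSpace ℝ (Fin q))
    (hWσ : ∀ v : EuclideanSpace ℝ (Fin q), ∀ i, Wσ v i = (w i / σ i ^ 2) * v i)
    (hWσt : ∀ v : EuclideanSpace ℝ (Fin q), ∀ i, Wσt v i = (wt i / σ i ^ 2) * v i)
    (R Rt : H →L[ℝ] H)
    (hR₁ : R ∘L (1 + sqrtCpr ∘L (ContinuousLinearMap.adjoint F) ∘L Wσ ∘L F ∘L sqrtCpr) = 1)
    (hR₂ : (1 + sqrtCpr ∘L (ContinuousLinearMap.adjoint F) ∘L Wσ ∘L F ∘L sqrtCpr) ∘L R = 1)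
    (hRt₁ : Rt ∘L (1 + sqrtCpr ∘L (ContinuousLinearMap.adjoint F) ∘L Wσt ∘L F ∘L sqrtCpr) = 1)
    (hRt₂ : (1 + sqrtCpr ∘L (ContinuousLinearMap.adjoint F) ∘L Wσt ∘L F ∘L sqrtCpr) ∘L Rt = 1)
    (Cpost Cpostt : H →L[ℝ] H)
    (hCpost : Cpost = sqrtCpr ∘L R ∘L sqrtCpr)
    (hCpostt : Cpostt = sqrtCpr ∘L Rt ∘L sqrtCpr)
    (htc : Summable (fun k => ⟪Cpost (b k), b k⟫))
    (htct : Summable (fun k => ⟪Cpostt (b k), b k⟫)) :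
    (∑' k, ⟪Cpostt (b k), b k⟫) ≤ ∑' k, ⟪Cpost (b k), b k⟫ := by
  set K := sqrtCpr with hK
  -- self-adjointness of K as inner product identity
  have hKsa : ∀ z y : H, ⟪K z, y⟫ = ⟪z, K y⟫ := by
    intro z y
    have h : ContinuousLinearMap.adjoint K = K :=
      (ContinuousLinearMap.isSelfAdjoint_iff'.mp hsqrt_sa)
    conv_lhs => rw [← h]
    exact ContinuousLinearMap.adjoint_inner_left K y z
  set A := 1 + K ∘L (ContinuousLinearMap.adjoint F) ∘L Wσ ∘L F ∘L K with hAdef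
  set At := 1 + K ∘L (ContinuousLinearMap.adjoint F) ∘L Wσt ∘L F ∘L K with hAtdef
  -- quadratic form of A and At
  have hform : ∀ (W' : EuclideanSpace ℝ (Fin q) →L[ℝ] EuclideanSpace ℝ (Fin q))
      (c : Fin q → ℝ), (∀ v : EuclideanSpace ℝ (Fin q), ∀ i, W' v i = c i * v i) →
      ∀ x y : H,
        ⟪(1 + K ∘L (ContinuousLinearMap.adjoint F) ∘L W' ∘L F ∘L K) x, y⟫
          = ⟪x, y⟫ + ∑ i, c i * (F (K x) i * F (K y) i) := by
    intro W' c hW' x y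
    simp only [ContinuousLinearMap.add_apply, ContinuousLinearMap.one_apply,
      ContinuousLinearMap.comp_apply, inner_add_left]
    congr 1
    rw [hKsa, ContinuousLinearMap.adjoint_inner_left]
    rw [PiLp.inner_apply]
    refine Finset.sum_congr rfl fun i _ => ?_
    simp [hW', RCLike.inner_apply]
    ring
  have hA : ∀ x y : H, ⟪A x, y⟫ = ⟪x, y⟫ + ∑ i, (w i / σ i ^ 2) * (F (K x) i * F (K y) i) :=
    hform Wσ (fun i => w i / σ i ^ 2) hWσ
  have hAt : ∀ x y : H, ⟪At x, y⟫ = ⟪x, y⟫ + ∑ i, (wt i / σ i ^ 2) * (F (K x) i * F (K y) i) :=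
    hform Wσt (fun i => wt i / σ i ^ 2) hWσt
  have hAsym : ∀ x y : H, ⟪A x, y⟫ = ⟪x, A y⟫ := by
    intro x y
    have h3 : ⟪x, A y⟫ = ⟪A y, x⟫ := real_inner_comm _ _
    rw [hA x y, h3, hA y x, real_inner_comm x y]
    congr 1
    exact Finset.sum_congr rfl fun i _ => by ring
  have hApos : ∀ x : H, 0 ≤ ⟪A x, x⟫ := by
    intro x
    rw [hA]
    have h1 : (0:ℝ) ≤ ⟪x, x⟫ := real_inner_self_nonneg
    have h2 : (0:ℝ) ≤ ∑ i, (w i / σ i ^ 2) * (F (K x) i * F (K x) i) :=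
      Finset.sum_nonneg fun i _ =>
        mul_nonneg (div_nonneg (hw i) (sq_nonneg _)) (mul_self_nonneg _)
    linarith
  have hAB : ∀ x : H, ⟪A x, x⟫ ≤ ⟪At x, x⟫ := by
    intro x
    rw [hA, hAt]
    have hsum : ∑ i, (w i / σ i ^ 2) * (F (K x) i * F (K x) i)
        ≤ ∑ i, (wt i / σ i ^ 2) * (F (K x) i * F (K x) i) :=
      Finset.sum_le_sum fun i _ =>
        mul_le_mul_of_nonneg_right
          ((div_le_div_iff_of_pos_right (pow_pos (hσ i) 2)).mpr (hle i)) (mul_self_nonneg _)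
    linarith
  -- inverses applied pointwise
  have hRapp : ∀ x, A (R x) = x := fun x => by
    have := ContinuousLinearMap.ext_iff.mp hR₂ x
    simpa using this
  have hRtapp : ∀ x, At (Rt x) = x := fun x => by
    have := ContinuousLinearMap.ext_iff.mp hRt₂ x
    simpa using this
  have hmono := inv_form_mono A At R Rt hAsym hApos hAB hRapp hRtapp
  refine Summable.tsum_le_tsum (fun k => ?_) htct htc
  rw [hCpost, hCpostt]
  simp only [ContinuousLinearMap.comp_apply]
  rw [hKsa (Rt (K (b k))) (b k), hKsa (R (K (b k))) (b k)]
  exact hmono (K (b k))
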